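/- In any Bayesian valid utility game whose prior ρ is independent (a product distribution), every strategic-form coarse Bayesian solution π satisfies E_{θ∼ρ}[E_{a∼π(θ)}[SW(a)]] ≥ ((1 − 1/e)/2) · OPT; that is, the price of anarchy for strategic-form coarse Bayesian solutions is at least (1 − 1/e)/2 in the independent case. -/

import Mathlib

/-!
Fix an optimal profile `a*(θ)` for every type profile `θ`. Valid utility games are smooth: for
profiles `a, b` we have `SW(b) - SW(a) ≤ ∑ i, vᵢ(bᵢ, a₋ᵢ)`, so the SFCBS condition yields
`E_θ[SW(s(θ))] ≤ 2·E[SW(π)]` for every strategy profile `s`. Player `i` cannot play `a*ᵢ(θ)`, which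
depends on the other types, but can play `a*ᵢ(ωⁱ[i ↦ θᵢ])` for a fixed profile `ωⁱ`. Averaging over
independent copies `ω¹, …, ωⁿ ∼ ρ`, the profiles `ωⁱ[i ↦ θᵢ]` are again independent with law `ρ`
when `ρ` is a product, so `E f({a*ᵢ(ηⁱ)}) ≤ 2·E[SW(π)]` for independent `η¹, …, ηⁿ ∼ ρ`.

It remains to prove the correlation gap `E f({a*ᵢ(ηⁱ)}) ≥ (1 - 1/e)·OPT`. Run `M` rounds in which
every player independently draws `ω ∼ ρ` and adds `a*ᵢ(ω)` with probability `1/M`. By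
submodularity each round closes a `1/(M+1)` fraction of the remaining gap to `OPT`, so after `M`
rounds the expected value is at least `(1 - (1 + 1/M)^(-M))·OPT`. On the other hand, all picks of
one player together are worth no more in expectation than a single pick `a*ᵢ(ηⁱ)`, since they
number one on average. Let `M → ∞`.
-/

open Finset

/-- A set function is monotone if it is nondecreasing with respect to inclusion. -/
def MonotoneFn {α : Type*} (f : Finset α → ℝ) : Prop :=
  ∀ ⦃X Y : Finset α⦄, X ⊆ Y → f X ≤ f Y

/-- A set function is submodular if marginal gains diminish as the set grows. -/
def SubmodularFn {α : Type*} [DecidableEq α] (f : Finset α → ℝ) : Prop :=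
  ∀ ⦃X Y : Finset α⦄, X ⊆ Y → ∀ u, u ∉ Y → f (insert u Y) - f Y ≤ f (insert u X) - f X

/-- `OPT = E_{θ∼ρ}[max_{a ∈ A^θ} SW a]`, where `SW a = f {a_1, …, a_n}`. -/
noncomputable def gOPT {n : ℕ} {Θ : Fin n → Type*} [∀ i, Fintype (Θ i)] [∀ i, DecidableEq (Θ i)]
    {E : Type*} [Fintype E] [DecidableEq E]
    (Act : ∀ i, Θ i → Finset E) (hAne : ∀ i t, (Act i t).Nonempty)
    (ρ : (∀ i, Θ i) → ℝ) (f : Finset E → ℝ) : ℝ :=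
  ∑ θ : ∀ i, Θ i, ρ θ *
    (Fintype.piFinset fun i => Act i (θ i)).sup'
      (Fintype.piFinset_nonempty.mpr fun i => hAne i (θ i))
      (fun a => f (Finset.univ.image a))

/-- `STR = max_{s ∈ S} E_{θ∼ρ}[SW (s θ)]`, the maximum over strategy profiles. -/
noncomputable def gSTR {n : ℕ} {Θ : Fin n → Type*} [∀ i, Fintype (Θ i)] [∀ i, DecidableEq (Θ i)]
    {E : Type*} [Fintype E] [DecidableEq E]
    (Act : ∀ i, Θ i → Finset E) (hAne : ∀ i t, (Act i t).Nonempty)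
    (ρ : (∀ i, Θ i) → ℝ) (f : Finset E → ℝ) : ℝ :=
  (Fintype.piFinset fun i => Fintype.piFinset fun t : Θ i => Act i t).sup'
    (Fintype.piFinset_nonempty.mpr fun i => Fintype.piFinset_nonempty.mpr fun t => hAne i t)
    (fun s => ∑ θ : ∀ i, Θ i, ρ θ * f (Finset.univ.image fun i => s i (θ i)))

section Submodular

variable {E : Type*} [DecidableEq E] {f : Finset E → ℝ}

theorem SubmodularFn.insert_sub_le (hmono : MonotoneFn f) (hsub : SubmodularFn f)
    {X Y : Finset E} (hXY : X ⊆ Y) (e : E) :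
    f (insert e Y) - f Y ≤ f (insert e X) - f X := by
  by_cases he : e ∈ Y
  · rw [insert_eq_of_mem he, sub_self, sub_nonneg]
    exact hmono (subset_insert e X)
  · exact hsub hXY e he

theorem SubmodularFn.union_sub_le (hmono : MonotoneFn f) (hsub : SubmodularFn f)
    {A B : Finset E} (hAB : A ⊆ B) (X : Finset E) :
    f (B ∪ X) - f B ≤ f (A ∪ X) - f A := by
  induction X using Finset.induction_on with
  | empty => simp
  | insert e X _ ih =>
    have := hsub.insert_sub_le hmono (union_subset_union_left (t := X) hAB) e
    rw [union_insert, union_insert]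
    linarith

theorem SubmodularFn.sub_le_sum_sub (hmono : MonotoneFn f) (hsub : SubmodularFn f)
    {J : Type*} [DecidableEq J] (t : Finset J) (x : J → Finset E) (S : Finset E) :
    f (S ∪ t.biUnion x) - f S ≤ ∑ j ∈ t, (f (S ∪ x j) - f S) := by
  induction t using Finset.induction_on with
  | empty => simp
  | insert j t hj ih =>
    have := hsub.union_sub_le hmono (subset_union_left (s₁ := S) (s₂ := t.biUnion x)) (x j)
    rw [biUnion_insert, sum_insert hj, union_comm (x j), ← union_assoc]
    linarith

theorem SubmodularFn.sum_sub_erase_le (hmono : MonotoneFn f) (hsub : SubmodularFn f)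
    {J : Type*} [DecidableEq J] (t : Finset J) (x : J → Finset E) (S : Finset E) :
    ∑ j ∈ t, (f (S ∪ t.biUnion x) - f (S ∪ (t.erase j).biUnion x))
      ≤ f (S ∪ t.biUnion x) - f S := by
  suffices ∀ u ⊆ t, ∑ j ∈ u, (f (S ∪ t.biUnion x) - f (S ∪ (t.erase j).biUnion x))
      ≤ f (S ∪ u.biUnion x) - f S from this t le_rfl
  intro u
  induction u using Finset.induction_on with
  | empty => simp
  | insert j u hj ih =>
    intro hu
    have hjt : j ∈ t := hu (mem_insert_self j u)
    have hsplit : S ∪ t.biUnion x = (S ∪ (t.erase j).biUnion x) ∪ x j := by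
      rw [union_assoc, union_comm _ (x j), ← biUnion_insert, insert_erase hjt]
    have hle : S ∪ u.biUnion x ⊆ S ∪ (t.erase j).biUnion x :=
      union_subset_union_right (biUnion_subset_biUnion_of_subset_left x fun i hi =>
        mem_erase.mpr ⟨fun h => hj (h ▸ hi), hu (mem_insert_of_mem hi)⟩)
    have := hsub.union_sub_le hmono hle (x j)
    rw [← hsplit] at this
    rw [sum_insert hj, biUnion_insert, union_comm (x j), ← union_assoc]
    linarith [ih ((subset_insert j u).trans hu)]

theorem SubmodularFn.sub_le_sum_insert_sub (hmono : MonotoneFn f) (hsub : SubmodularFn f)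
    {J : Type*} [DecidableEq J] (t : Finset J) (g : J → E) (S : Finset E) :
    f (t.image g) - f S ≤ ∑ j ∈ t, (f (insert (g j) S) - f S) := by
  have h := hsub.sub_le_sum_sub hmono t (fun j => {g j}) S
  simp only [biUnion_singleton, union_singleton] at h
  linarith [hmono (subset_union_right (s₁ := S) (s₂ := t.image g))]

end Submodular

theorem image_update {ι E : Type*} [Fintype ι] [DecidableEq ι] [DecidableEq E] (a : ι → E)
    (i : ι) (x : E) : univ.image (Function.update a i x) = insert x ((univ.erase i).image a) := by
  rw [← insert_erase (mem_univ i), image_insert, Function.update_self,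
    erase_insert (notMem_erase i _)]
  congr 1
  exact image_congr fun j hj => Function.update_of_ne (ne_of_mem_erase hj) _ _

theorem sum_mul_le_sum_mul_of_ne_zero {α : Type*} (t : Finset α) {π F G : α → ℝ}
    (hπ : ∀ a, 0 ≤ π a) (h : ∀ a, π a ≠ 0 → F a ≤ G a) :
    ∑ a ∈ t, π a * F a ≤ ∑ a ∈ t, π a * G a := by
  refine sum_le_sum fun a _ => ?_
  rcases (hπ a).eq_or_lt with h0 | hpos
  · simp [← h0]
  · exact mul_le_mul_of_nonneg_left (h a hpos.ne') hpos.le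

section ProductWeights

variable {ι : Type*} [Fintype ι] {X : ι → Type*}

def piWeight (w : ∀ i, X i → ℝ) (x : ∀ i, X i) : ℝ :=
  ∏ i, w i (x i)

theorem piWeight_nonneg {w : ∀ i, X i → ℝ} (hw : ∀ i a, 0 ≤ w i a) (x : ∀ i, X i) :
    0 ≤ piWeight w x :=
  prod_nonneg fun i _ => hw i (x i)

variable [DecidableEq ι]

theorem piWeight_update (w : ∀ i, X i → ℝ) (x : ∀ i, X i) (j : ι) (a : X j) :
    piWeight w (Function.update x j a) = w j a * ∏ i ∈ univ.erase j, w i (x i) := by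
  rw [piWeight, ← mul_prod_erase univ _ (mem_univ j), Function.update_self]
  congr 1
  exact prod_congr rfl fun i hi => by rw [Function.update_of_ne (ne_of_mem_erase hi)]

variable [∀ i, Fintype (X i)]

def piExpect (w : ∀ i, X i → ℝ) (F : (∀ i, X i) → ℝ) : ℝ :=
  ∑ x, piWeight w x * F x

variable {w : ∀ i, X i → ℝ}

theorem sum_piWeight (hw : ∀ i, ∑ a, w i a = 1) : ∑ x, piWeight w x = 1 := by
  simp only [piWeight, ← Fintype.prod_sum, hw, prod_const_one]

theorem piExpect_const (hw : ∀ i, ∑ a, w i a = 1) (c : ℝ) : piExpect w (fun _ => c) = c := by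
  rw [piExpect, ← sum_mul, sum_piWeight hw, one_mul]

theorem piExpect_mono (hw : ∀ i a, 0 ≤ w i a) {F G : (∀ i, X i) → ℝ} (h : ∀ x, F x ≤ G x) :
    piExpect w F ≤ piExpect w G :=
  sum_le_sum fun x _ => mul_le_mul_of_nonneg_left (h x) (piWeight_nonneg hw x)

theorem piExpect_add (F G : (∀ i, X i) → ℝ) :
    piExpect w (fun x => F x + G x) = piExpect w F + piExpect w G := by
  simp only [piExpect, mul_add, sum_add_distrib]

theorem piExpect_sub (F G : (∀ i, X i) → ℝ) :
    piExpect w (fun x => F x - G x) = piExpect w F - piExpect w G := by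
  simp only [piExpect, mul_sub, sum_sub_distrib]

theorem piExpect_sum {κ : Type*} (t : Finset κ) (F : κ → (∀ i, X i) → ℝ) :
    piExpect w (fun x => ∑ k ∈ t, F k x) = ∑ k ∈ t, piExpect w (F k) := by
  simp only [piExpect, mul_sum]
  exact sum_comm

theorem piExpect_mul_left (c : ℝ) (F : (∀ i, X i) → ℝ) :
    piExpect w (fun x => c * F x) = c * piExpect w F := by
  simp only [piExpect, mul_sum]
  exact sum_congr rfl fun x _ => mul_left_comm _ _ _

theorem piExpect_eq_sum_update (j : ι) (hw : ∑ a, w j a = 1) (F : (∀ i, X i) → ℝ) :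
    piExpect w F = ∑ a, w j a * piExpect w (fun x => F (Function.update x j a)) := by
  have hinv : Function.Involutive fun y : X j × (∀ i, X i) => (y.2 j, Function.update y.2 j y.1) :=
    fun y => by simp
  let σ := hinv.toPerm
  have hσ : ∀ y : X j × (∀ i, X i), w j y.1 * (piWeight w y.2 * F (Function.update y.2 j y.1))
      = w j (σ y).1 * (piWeight w (σ y).2 * F (σ y).2) := by
    rintro ⟨a, x⟩
    show _ = w j (x j) * (piWeight w (Function.update x j a) * F (Function.update x j a))
    rw [piWeight_update, piWeight, ← mul_prod_erase univ _ (mem_univ j)]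
    ring
  calc piExpect w F = ∑ y : X j × (∀ i, X i), w j y.1 * (piWeight w y.2 * F y.2) := by
        simp only [Fintype.sum_prod_type, ← mul_sum, ← sum_mul, hw, one_mul]
        rfl
    _ = ∑ y : X j × (∀ i, X i), w j y.1 * (piWeight w y.2 * F (Function.update y.2 j y.1)) := by
        rw [← Equiv.sum_comp σ]
        exact Fintype.sum_congr _ _ fun y => (hσ y).symm
    _ = _ := by
        rw [Fintype.sum_prod_type]
        simp only [piExpect, mul_sum]

theorem piExpect_apply (hw : ∀ i, ∑ a, w i a = 1) (j : ι) (h : X j → ℝ) :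
    piExpect w (fun x => h (x j)) = ∑ a, w j a * h a := by
  rw [piExpect_eq_sum_update j (hw j)]
  simp only [Function.update_self, piExpect_const hw]

theorem piExpect_fin_succ {n : ℕ} {X : Fin (n + 1) → Type*} [∀ i, Fintype (X i)]
    (w : ∀ i, X i → ℝ) (F : (∀ i, X i) → ℝ) :
    piExpect w F
      = ∑ a, w 0 a * piExpect (fun i : Fin n => w i.succ) (fun x => F (Fin.cons a x)) := by
  rw [piExpect, ← (Fin.consEquiv X).sum_comp, Fintype.sum_prod_type]
  simp only [piExpect, mul_sum, piWeight, Fin.prod_univ_succ, mul_assoc]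
  rfl

theorem piExpect_piWeight_comm {α β Y : Type*} [Fintype α] [DecidableEq α] [Fintype β]
    [DecidableEq β] [Fintype Y] (w : α → β → Y → ℝ) (F : (α → β → Y) → ℝ) :
    piExpect (fun a => piWeight (w a)) F
      = piExpect (fun b => piWeight fun a => w a b) (fun y => F fun a b => y b a) := by
  rw [piExpect, ← (Equiv.piComm fun (_ : β) (_ : α) => Y).sum_comp]
  simp only [piExpect, piWeight, Equiv.piComm_apply]
  exact Fintype.sum_congr _ _ fun y => by rw [prod_comm]; rfl

theorem piExpect_indep {β : Type*} (j : ι) (hw : ∑ a, w j a = 1) {G : (∀ i, X i) → β}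
    (hG : ∀ x a, G (Function.update x j a) = G x) (h : X j → β → ℝ) :
    piExpect w (fun x => h (x j) (G x)) = ∑ a, w j a * piExpect w (fun x => h a (G x)) := by
  rw [piExpect_eq_sum_update j hw]
  simp only [Function.update_self, hG]

/-- Replacing the `i`-th coordinate of the `i`-th of `|ι|` independent copies of a product
distribution by a fresh independent draw does not change the joint law of the copies. -/
theorem piExpect_update_diag (hw : ∑ x, piWeight w x = 1) (H : (ι → ∀ i, X i) → ℝ) :
    piExpect (fun _ : ι => piWeight w)
        (fun ω => piExpect w fun x => H fun i => Function.update (ω i) i (x i))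
      = piExpect (fun _ : ι => piWeight w) H := by
  set W := fun x : (∀ i, X i) × (ι → ∀ i, X i) => piWeight w x.1 * ∏ i, piWeight w (x.2 i)
  have hinv : Function.Involutive fun x : (∀ i, X i) × (ι → ∀ i, X i) =>
      ((fun i => x.2 i i), fun i => Function.update (x.2 i) i (x.1 i)) := by
    rintro ⟨x, ω⟩
    ext i <;> simp
  have hW : ∀ x, W (hinv.toPerm _ x) = W x := by
    rintro ⟨x, ω⟩
    show piWeight w (fun i => ω i i) * ∏ i, piWeight w (Function.update (ω i) i (x i))
      = piWeight w x * ∏ i, piWeight w (ω i)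
    simp only [piWeight_update]
    simp only [piWeight, ← prod_mul_distrib]
    refine prod_congr rfl fun i _ => ?_
    rw [← mul_prod_erase univ (fun j => w j (ω i j)) (mem_univ i)]
    ring
  calc piExpect (fun _ : ι => piWeight w)
        (fun ω => piExpect w fun x => H fun i => Function.update (ω i) i (x i))
      = ∑ x, W x * H (hinv.toPerm _ x).2 := by
        simp only [piExpect, piWeight, Fintype.sum_prod_type, mul_sum, W,
          Function.Involutive.coe_toPerm]
        rw [sum_comm]
        exact sum_congr rfl fun x _ => sum_congr rfl fun ω _ => by ring
    _ = ∑ x, W x * H x.2 := by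
        rw [← Equiv.sum_comp (hinv.toPerm _)]
        exact Fintype.sum_congr _ _ fun x => by
          rw [hW]
          exact congrArg (fun y => W x * H y.2) (hinv x)
    _ = piExpect (fun _ : ι => piWeight w) H := by
        simp only [W, Fintype.sum_prod_type, mul_assoc, ← mul_sum]
        rw [← sum_mul, hw, one_mul]
        rfl

end ProductWeights

theorem biUnion_univ_fin_succ {E : Type*} [DecidableEq E] {n : ℕ} (F : Fin (n + 1) → Finset E) :
    univ.biUnion F = F 0 ∪ univ.biUnion fun i : Fin n => F i.succ := by
  ext e
  simp [Fin.exists_fin_succ]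

theorem piExpect_biUnion_le {E : Type*} [DecidableEq E] {n : ℕ} {X Y : Fin n → Type*}
    [∀ i, Fintype (X i)] [∀ i, Fintype (Y i)] {μ : ∀ i, X i → ℝ} {ν : ∀ i, Y i → ℝ}
    (hμ : ∀ i x, 0 ≤ μ i x) (hν : ∀ i y, 0 ≤ ν i y) (F : Finset E → ℝ)
    {A : ∀ i, X i → Finset E} {B : ∀ i, Y i → Finset E}
    (hAB : ∀ i S, ∑ x, μ i x * F (S ∪ A i x) ≤ ∑ y, ν i y * F (S ∪ B i y)) (S : Finset E) :
    piExpect μ (fun x => F (S ∪ univ.biUnion fun i => A i (x i)))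
      ≤ piExpect ν (fun y => F (S ∪ univ.biUnion fun i => B i (y i))) := by
  induction n generalizing S with
  | zero => simp [piExpect, piWeight]
  | succ n ih =>
    have ih' := fun S => ih (fun i => hμ i.succ) (fun i => hν i.succ) (fun i => hAB i.succ) S
    rw [piExpect_fin_succ μ, piExpect_fin_succ ν]
    simp only [biUnion_univ_fin_succ, Fin.cons_zero, Fin.cons_succ, ← union_assoc]
    calc ∑ a, μ 0 a * piExpect (fun i : Fin n => μ i.succ)
            (fun x => F (S ∪ A 0 a ∪ univ.biUnion fun i => A i.succ (x i)))
        ≤ ∑ a, μ 0 a * piExpect (fun i : Fin n => ν i.succ)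
            (fun y => F (S ∪ A 0 a ∪ univ.biUnion fun i => B i.succ (y i))) :=
          sum_le_sum fun a _ => mul_le_mul_of_nonneg_left (ih' _) (hμ 0 a)
      _ = piExpect (fun i : Fin n => ν i.succ)
            (fun y => ∑ a, μ 0 a * F ((S ∪ univ.biUnion fun i => B i.succ (y i)) ∪ A 0 a)) := by
          simp only [piExpect_sum, piExpect_mul_left, union_right_comm]
      _ ≤ piExpect (fun i : Fin n => ν i.succ)
            (fun y => ∑ b, ν 0 b * F ((S ∪ univ.biUnion fun i => B i.succ (y i)) ∪ B 0 b)) :=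
          piExpect_mono (fun i => hν i.succ) fun y => by exact hAB 0 _
      _ = ∑ b, ν 0 b * piExpect (fun i : Fin n => ν i.succ)
            (fun y => F (S ∪ B 0 b ∪ univ.biUnion fun i => B i.succ (y i))) := by
          simp only [piExpect_sum, piExpect_mul_left, union_right_comm]

section CoinFlips

variable {Ω E : Type*} [DecidableEq E] {p : Ω → ℝ} {s : ℝ}

def coinWeight (p : Ω → ℝ) (s : ℝ) (v : Ω × Bool) : ℝ :=
  p v.1 * if v.2 then s else 1 - s

def coinPick (c : Ω → E) (v : Ω × Bool) : Finset E :=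
  if v.2 then {c v.1} else ∅

theorem coinWeight_nonneg (hp : ∀ ω, 0 ≤ p ω) (hs0 : 0 ≤ s) (hs1 : s ≤ 1) (v : Ω × Bool) :
    0 ≤ coinWeight p s v := by
  unfold coinWeight
  split_ifs <;> nlinarith [hp v.1]

theorem apply_union_coinPick_sub (f : Finset E → ℝ) (S : Finset E) (c : Ω → E) (v : Ω × Bool) :
    f (S ∪ coinPick c v) - f S = if v.2 then f (insert (c v.1) S) - f S else 0 := by
  unfold coinPick
  split_ifs <;> simp

variable [Fintype Ω]

theorem sum_coinWeight (hp : ∑ ω, p ω = 1) : ∑ v, coinWeight p s v = 1 := by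
  simp [coinWeight, Fintype.sum_prod_type, ← mul_add, hp]

theorem sum_coinWeight_mul_ite (h : Ω → ℝ) :
    ∑ v, coinWeight p s v * (if v.2 then h v.1 else 0) = s * ∑ ω, p ω * h ω := by
  simp only [coinWeight, Fintype.sum_prod_type, Fintype.sum_bool, mul_sum]
  exact sum_congr rfl fun ω _ => by simp; ring

variable {f : Finset E → ℝ} {J : Type*} [Fintype J] [DecidableEq J]

theorem piExpect_union_coinPick_le (hmono : MonotoneFn f) (hsub : SubmodularFn f)
    (hp0 : ∀ ω, 0 ≤ p ω) (hp1 : ∑ ω, p ω = 1) (hs0 : 0 ≤ s) (hs1 : s ≤ 1)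
    (c : J → Ω → E) (S : Finset E) :
    piExpect (fun _ : J => coinWeight p s)
        (fun L => f (S ∪ univ.biUnion fun j => coinPick (c j) (L j)))
      ≤ f S + s * ∑ j, ∑ ω, p ω * (f (insert (c j ω) S) - f S) := by
  have hw1 : ∀ _ : J, ∑ v, coinWeight p s v = 1 := fun _ => sum_coinWeight hp1
  calc _ ≤ piExpect (fun _ : J => coinWeight p s)
          (fun L => f S + ∑ j, (f (S ∪ coinPick (c j) (L j)) - f S)) :=
        piExpect_mono (fun _ => coinWeight_nonneg hp0 hs0 hs1) fun L => by
          linarith [hsub.sub_le_sum_sub hmono univ (fun j => coinPick (c j) (L j)) S]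
    _ = f S + ∑ j, ∑ v, coinWeight p s v * (f (S ∪ coinPick (c j) v) - f S) := by
        rw [piExpect_add, piExpect_const hw1, piExpect_sum]
        congr 1
        exact sum_congr rfl fun j _ =>
          piExpect_apply hw1 j fun v => f (S ∪ coinPick (c j) v) - f S
    _ = f S + ∑ j, s * ∑ ω, p ω * (f (insert (c j ω) S) - f S) := by
        simp only [apply_union_coinPick_sub]
        exact congrArg _ (sum_congr rfl fun j _ =>
          sum_coinWeight_mul_ite fun ω => f (insert (c j ω) S) - f S)
    _ = _ := by rw [mul_sum]

/-- The gain from adding `c j (L j).1` last is independent of `L j`, whose coin shows heads with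
probability `s`. -/
theorem piExpect_sub_erase_coinPick (hp1 : ∑ ω, p ω = 1) (c : J → Ω → E) (S : Finset E) (j : J) :
    piExpect (fun _ : J => coinWeight p s) (fun L =>
        f (S ∪ univ.biUnion fun i => coinPick (c i) (L i))
          - f (S ∪ (univ.erase j).biUnion fun i => coinPick (c i) (L i)))
      = s * ∑ ω, p ω * piExpect (fun _ : J => coinWeight p s) (fun L =>
          f (insert (c j ω) (S ∪ (univ.erase j).biUnion fun i => coinPick (c i) (L i)))
            - f (S ∪ (univ.erase j).biUnion fun i => coinPick (c i) (L i))) := by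
  have hsplit : ∀ L : J → Ω × Bool, S ∪ univ.biUnion (fun i => coinPick (c i) (L i))
      = (S ∪ (univ.erase j).biUnion fun i => coinPick (c i) (L i)) ∪ coinPick (c j) (L j) := by
    intro L
    rw [union_assoc, union_comm _ (coinPick _ _),
      ← biUnion_insert (t := fun i => coinPick (c i) (L i)), insert_erase (mem_univ j)]
  have hG : ∀ (L : J → Ω × Bool) v, ((univ.erase j).biUnion fun i => coinPick (c i)
      (Function.update L j v i)) = (univ.erase j).biUnion fun i => coinPick (c i) (L i) :=
    fun L v => biUnion_congr rfl fun i hi => by rw [Function.update_of_ne (ne_of_mem_erase hi)]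
  simp only [hsplit, apply_union_coinPick_sub]
  rw [piExpect_indep (w := fun _ => coinWeight p s) j (sum_coinWeight hp1) hG
    fun v T => if v.2 then f (insert (c j v.1) (S ∪ T)) - f (S ∪ T) else 0]
  refine (sum_congr rfl fun v _ => ?_).trans (sum_coinWeight_mul_ite _)
  split_ifs <;> simp [piExpect]

theorem greedy_round_gain (hmono : MonotoneFn f) (hsub : SubmodularFn f)
    (hp0 : ∀ ω, 0 ≤ p ω) (hp1 : ∑ ω, p ω = 1) (hs0 : 0 ≤ s) (hs1 : s ≤ 1)
    (c : J → Ω → E) (S : Finset E) :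
    s * (∑ ω, p ω * f (univ.image fun j => c j ω) - piExpect (fun _ : J => coinWeight p s)
        (fun L => f (S ∪ univ.biUnion fun j => coinPick (c j) (L j))))
      ≤ piExpect (fun _ : J => coinWeight p s)
          (fun L => f (S ∪ univ.biUnion fun j => coinPick (c j) (L j))) - f S := by
  set w := fun _ : J => coinWeight p s
  set P := fun L : J → Ω × Bool => univ.biUnion fun j => coinPick (c j) (L j)
  set Q := fun (j : J) (L : J → Ω × Bool) => (univ.erase j).biUnion fun i => coinPick (c i) (L i)
  have hw0 : ∀ j v, 0 ≤ w j v := fun _ => coinWeight_nonneg hp0 hs0 hs1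
  have hw1 : ∀ j, ∑ v, w j v = 1 := fun _ => sum_coinWeight hp1
  have hQP : ∀ j L, Q j L ⊆ P L := fun j L =>
    biUnion_subset_biUnion_of_subset_left _ (erase_subset _ _)
  calc s * (∑ ω, p ω * f (univ.image fun j => c j ω) - piExpect w fun L => f (S ∪ P L))
      = s * ∑ ω, p ω * piExpect w fun L => f (univ.image fun j => c j ω) - f (S ∪ P L) := by
        simp only [piExpect_sub, piExpect_const hw1, mul_sub, sum_sub_distrib, ← sum_mul, hp1,
          one_mul]
    _ ≤ s * ∑ ω, p ω * piExpect w fun L => ∑ j, (f (insert (c j ω) (S ∪ P L)) - f (S ∪ P L)) :=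
        mul_le_mul_of_nonneg_left (sum_le_sum fun ω _ => mul_le_mul_of_nonneg_left
          (piExpect_mono hw0 fun L => hsub.sub_le_sum_insert_sub hmono univ _ _) (hp0 ω)) hs0
    _ ≤ s * ∑ ω, p ω * piExpect w fun L =>
          ∑ j, (f (insert (c j ω) (S ∪ Q j L)) - f (S ∪ Q j L)) :=
        mul_le_mul_of_nonneg_left (sum_le_sum fun ω _ => mul_le_mul_of_nonneg_left
          (piExpect_mono hw0 fun L => sum_le_sum fun j _ =>
            hsub.insert_sub_le hmono (union_subset_union_right (hQP j L)) _) (hp0 ω)) hs0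
    _ = ∑ j, piExpect w fun L => f (S ∪ P L) - f (S ∪ Q j L) := by
        simp only [piExpect_sum, mul_sum]
        rw [sum_comm]
        exact sum_congr rfl fun j _ =>
          ((piExpect_sub_erase_coinPick hp1 c S j).trans (mul_sum _ _ _)).symm
    _ = piExpect w fun L => ∑ j, (f (S ∪ P L) - f (S ∪ Q j L)) := (piExpect_sum _ _).symm
    _ ≤ piExpect w fun L => f (S ∪ P L) - f S :=
        piExpect_mono hw0 fun L => hsub.sum_sub_erase_le hmono univ _ S
    _ = (piExpect w fun L => f (S ∪ P L)) - f S := by rw [piExpect_sub, piExpect_const hw1]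

end CoinFlips

section CorrelationGap

variable {Ω E : Type*} [Fintype Ω] [DecidableEq E] {p : Ω → ℝ} {s : ℝ} {f : Finset E → ℝ}

/-- `m` rounds of a discretized continuous greedy process: in every round each `j` independently
draws `ω ∼ p` and, with probability `s`, picks `c j ω`. -/
def roundsValue {J : Type*} [Fintype J] [DecidableEq J] (p : Ω → ℝ) (s : ℝ) (c : J → Ω → E)
    (f : Finset E → ℝ) (m : ℕ) : ℝ :=
  piExpect (fun _ : Fin m => piWeight fun _ : J => coinWeight p s)
    (fun g => f (univ.biUnion fun r => univ.biUnion fun j => coinPick (c j) (g r j)))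

variable {J : Type*} [Fintype J] [DecidableEq J]

theorem roundsValue_zero (c : J → Ω → E) : roundsValue p s c f 0 = f ∅ := by
  simp [roundsValue, piExpect, piWeight]

theorem roundsValue_succ_ge (hmono : MonotoneFn f) (hsub : SubmodularFn f)
    (hp0 : ∀ ω, 0 ≤ p ω) (hp1 : ∑ ω, p ω = 1) (hs0 : 0 ≤ s) (hs1 : s ≤ 1)
    (c : J → Ω → E) (m : ℕ) :
    roundsValue p s c f m + s * ∑ ω, p ω * f (univ.image fun j => c j ω)
      ≤ (1 + s) * roundsValue p s c f (m + 1) := by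
  set R := fun g : Fin m → J → Ω × Bool =>
    univ.biUnion fun r => univ.biUnion fun j => coinPick (c j) (g r j)
  set V := fun g => piExpect (fun _ : J => coinWeight p s)
    (fun L => f (R g ∪ univ.biUnion fun j => coinPick (c j) (L j)))
  have hw0 : ∀ (_ : Fin m) L, 0 ≤ piWeight (fun _ : J => coinWeight p s) L :=
    fun _ => piWeight_nonneg fun _ => coinWeight_nonneg hp0 hs0 hs1
  have hw1 : ∀ _ : Fin m, ∑ L, piWeight (fun _ : J => coinWeight p s) L = 1 :=
    fun _ => sum_piWeight fun _ => sum_coinWeight hp1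
  have hsucc : roundsValue p s c f (m + 1)
      = piExpect (fun _ : Fin m => piWeight fun _ : J => coinWeight p s) V := by
    rw [roundsValue, piExpect_fin_succ]
    simp only [biUnion_univ_fin_succ, Fin.cons_zero, Fin.cons_succ, V, piExpect, mul_sum]
    rw [sum_comm]
    exact sum_congr rfl fun g _ => sum_congr rfl fun L _ => by rw [union_comm]; ring
  have hgain := piExpect_mono hw0 fun g =>
    greedy_round_gain hmono hsub hp0 hp1 hs0 hs1 c (R g)
  rw [piExpect_mul_left, piExpect_sub, piExpect_const hw1, piExpect_sub, ← hsucc] at hgain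
  change _ ≤ _ - roundsValue p s c f m at hgain
  linarith

theorem roundsValue_ge (hf : 0 ≤ f ∅) (hmono : MonotoneFn f) (hsub : SubmodularFn f)
    (hp0 : ∀ ω, 0 ≤ p ω) (hp1 : ∑ ω, p ω = 1) (hs0 : 0 ≤ s) (hs1 : s ≤ 1)
    (c : J → Ω → E) (m : ℕ) :
    (1 - ((1 + s) ^ m)⁻¹) * ∑ ω, p ω * f (univ.image fun j => c j ω)
      ≤ roundsValue p s c f m := by
  induction m with
  | zero => simpa [roundsValue_zero] using hf
  | succ m ih =>
    have hstep := roundsValue_succ_ge hmono hsub hp0 hp1 hs0 hs1 c m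
    have hrec : (1 + s) * (1 - ((1 + s) ^ (m + 1))⁻¹) = 1 - ((1 + s) ^ m)⁻¹ + s := by
      field_simp
      ring
    refine le_of_mul_le_mul_left ?_ (by linarith : (0 : ℝ) < 1 + s)
    rw [← mul_assoc, hrec]
    linarith

theorem roundsValue_le {n M : ℕ} (hmono : MonotoneFn f) (hsub : SubmodularFn f)
    (hp0 : ∀ ω, 0 ≤ p ω) (hp1 : ∑ ω, p ω = 1) (hs0 : 0 ≤ s) (hs1 : s ≤ 1) (hMs : M * s = 1)
    (c : Fin n → Ω → E) :
    roundsValue p s c f M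
      ≤ piExpect (fun _ : Fin n => p) fun η => f (univ.image fun i => c i (η i)) := by
  have hone : ∀ i S, ∑ y, piWeight (fun _ : Fin M => coinWeight p s) y
        * f (S ∪ univ.biUnion fun r => coinPick (c i) (y r))
      ≤ ∑ ω, p ω * f (S ∪ {c i ω}) := by
    intro i S
    calc _ ≤ f S + s * ∑ _ : Fin M, ∑ ω, p ω * (f (insert (c i ω) S) - f S) :=
          piExpect_union_coinPick_le hmono hsub hp0 hp1 hs0 hs1 (fun _ => c i) S
      _ = ∑ ω, p ω * f (S ∪ {c i ω}) := by
          simp only [sum_const, card_univ, Fintype.card_fin, nsmul_eq_mul, union_singleton,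
            mul_sub, sum_sub_distrib, ← sum_mul, hp1]
          linear_combination (∑ ω, p ω * f (insert (c i ω) S) - f S) * hMs
  rw [roundsValue, piExpect_piWeight_comm]
  convert piExpect_biUnion_le (fun _ => piWeight_nonneg fun _ => coinWeight_nonneg hp0 hs0 hs1)
    (fun _ => hp0) f hone ∅ using 3 with y η
  · congr 1
    ext e
    simp only [mem_biUnion, mem_univ, true_and, empty_union]
    exact exists_comm
  · rw [empty_union, biUnion_singleton]

open Filter Topology in
theorem correlation_gap (hf : 0 ≤ f ∅) (hmono : MonotoneFn f) (hsub : SubmodularFn f)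
    (hp0 : ∀ ω, 0 ≤ p ω) (hp1 : ∑ ω, p ω = 1) {n : ℕ} (c : Fin n → Ω → E) :
    (1 - (Real.exp 1)⁻¹) * ∑ ω, p ω * f (univ.image fun i => c i ω)
      ≤ piExpect (fun _ : Fin n => p) fun η => f (univ.image fun i => c i (η i)) := by
  have hlim : Tendsto (fun M : ℕ => (1 - ((1 + 1 / (M : ℝ)) ^ M)⁻¹)
      * ∑ ω, p ω * f (univ.image fun i => c i ω)) atTop
      (𝓝 ((1 - (Real.exp 1)⁻¹) * ∑ ω, p ω * f (univ.image fun i => c i ω))) :=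
    (((Real.tendsto_one_add_div_pow_exp 1).inv₀ (Real.exp_ne_zero 1)).const_sub 1).mul_const _
  refine le_of_tendsto hlim (eventually_atTop.2 ⟨1, fun M hM => ?_⟩)
  have hM : (1 : ℝ) ≤ M := by exact_mod_cast hM
  have hs0 : 0 ≤ 1 / (M : ℝ) := by positivity
  have hs1 : 1 / (M : ℝ) ≤ 1 := (div_le_one (by linarith)).2 hM
  exact (roundsValue_ge hf hmono hsub hp0 hp1 hs0 hs1 c M).trans
    (roundsValue_le hmono hsub hp0 hp1 hs0 hs1 (by field_simp) c)

end CorrelationGap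

theorem sub_le_sum_utility_update {ι E : Type*} [Fintype ι] [DecidableEq ι] [DecidableEq E]
    {f : Finset E → ℝ} (hmono : MonotoneFn f) (hsub : SubmodularFn f) (v : ι → (ι → E) → ℝ)
    (a b : ι → E) (hmarg : ∀ i, f (univ.image (Function.update a i (b i)))
      - f ((univ.image (Function.update a i (b i))).erase (b i))
        ≤ v i (Function.update a i (b i))) :
    f (univ.image b) - f (univ.image a) ≤ ∑ i, v i (Function.update a i (b i)) := by
  refine (hsub.sub_le_sum_insert_sub hmono univ b _).trans (sum_le_sum fun i _ => ?_)
  have hdrop := hsub.insert_sub_le hmono (image_subset_image (f := a) (erase_subset i univ)) (b i)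
  have herase := hmono (erase_subset (b i) ((univ.erase i).image a))
  have := hmarg i
  rw [image_update, erase_insert_eq_erase] at this
  linarith

theorem welfare_le_two_mul_sfcbs_welfare {ι : Type*} [Fintype ι] [DecidableEq ι]
    {Θ : ι → Type*} [∀ i, Fintype (Θ i)] {E : Type*} [Fintype E] [DecidableEq E]
    (Act : ∀ i, Θ i → Finset E) (ρ : (∀ i, Θ i) → ℝ) (hρ0 : ∀ θ, 0 ≤ ρ θ)
    {f : Finset E → ℝ} (hmono : MonotoneFn f) (hsub : SubmodularFn f) (v : ι → (ι → E) → ℝ)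
    (htotal : ∀ a : ι → E, (∀ i, ∃ t, a i ∈ Act i t) → ∑ i, v i a ≤ f (univ.image a))
    (hmarg : ∀ a : ι → E, (∀ i, ∃ t, a i ∈ Act i t) → ∀ i,
      f (univ.image a) - f ((univ.image a).erase (a i)) ≤ v i a)
    (π : (∀ i, Θ i) → (ι → E) → ℝ) (hπ0 : ∀ θ a, 0 ≤ π θ a) (hπ1 : ∀ θ, ∑ a, π θ a = 1)
    (hπsupp : ∀ θ a, π θ a ≠ 0 → ∀ i, a i ∈ Act i (θ i))
    (hSFCBS : ∀ i, ∀ sᵢ : Θ i → E, (∀ t, sᵢ t ∈ Act i t) →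
      ∑ θ, ρ θ * ∑ a, π θ a * v i (Function.update a i (sᵢ (θ i)))
        ≤ ∑ θ, ρ θ * ∑ a, π θ a * v i a)
    (st : ∀ i, Θ i → E) (hst : ∀ i t, st i t ∈ Act i t) :
    ∑ θ, ρ θ * f (univ.image fun i => st i (θ i))
      ≤ 2 * ∑ θ, ρ θ * ∑ a, π θ a * f (univ.image a) := by
  have hswap : ∀ X : ι → (∀ i, Θ i) → (ι → E) → ℝ,
      ∑ θ, ρ θ * ∑ a, π θ a * ∑ i, X i θ a = ∑ i, ∑ θ, ρ θ * ∑ a, π θ a * X i θ a := by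
    intro X
    simp only [mul_sum]
    rw [eq_comm, sum_comm]
    exact sum_congr rfl fun θ _ => sum_comm
  have hutil : ∑ i, ∑ θ, ρ θ * ∑ a, π θ a * v i a
      ≤ ∑ θ, ρ θ * ∑ a, π θ a * f (univ.image a) := by
    rw [← hswap]
    exact sum_le_sum fun θ _ => mul_le_mul_of_nonneg_left (sum_mul_le_sum_mul_of_ne_zero univ
      (hπ0 θ) fun a ha => htotal a fun i => ⟨θ i, hπsupp θ a ha i⟩) (hρ0 θ)
  have hdev : ∑ i, ∑ θ, ρ θ * ∑ a, π θ a * v i (Function.update a i (st i (θ i)))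
      ≤ ∑ i, ∑ θ, ρ θ * ∑ a, π θ a * v i a :=
    sum_le_sum fun i _ => hSFCBS i (st i) (hst i)
  have hgain : ∀ θ a, π θ a ≠ 0 → f (univ.image fun i => st i (θ i)) - f (univ.image a)
      ≤ ∑ i, v i (Function.update a i (st i (θ i))) := by
    intro θ a ha
    refine sub_le_sum_utility_update hmono hsub v a _ fun i => ?_
    have hvalid : ∀ j, ∃ t, Function.update a i (st i (θ i)) j ∈ Act j t := by
      intro j
      by_cases hji : j = i
      · subst hji
        exact ⟨θ j, by rw [Function.update_self]; exact hst j (θ j)⟩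
      · exact ⟨θ j, by rw [Function.update_of_ne hji]; exact hπsupp θ a ha j⟩
    simpa only [Function.update_self] using hmarg _ hvalid i
  have hW : ∑ θ, ρ θ * f (univ.image fun i => st i (θ i))
        - ∑ θ, ρ θ * ∑ a, π θ a * f (univ.image a)
      = ∑ θ, ρ θ * ∑ a, π θ a * (f (univ.image fun i => st i (θ i)) - f (univ.image a)) := by
    simp only [mul_sub, sum_sub_distrib, ← sum_mul, hπ1, one_mul]
  have hgain' := sum_le_sum fun θ (_ : θ ∈ univ) => mul_le_mul_of_nonneg_left
    (sum_mul_le_sum_mul_of_ne_zero univ (hπ0 θ) (hgain θ)) (hρ0 θ)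
  rw [← hW, hswap] at hgain'
  linarith

theorem sfcbs_poa_independent_general
    {n : ℕ} {Θ : Fin n → Type*} [∀ i, Fintype (Θ i)] [∀ i, DecidableEq (Θ i)]
    {E : Type*} [Fintype E] [DecidableEq E]
    (Act : ∀ i, Θ i → Finset E) (hAne : ∀ i t, (Act i t).Nonempty)
    (ρ : (∀ i, Θ i) → ℝ) (hρ0 : ∀ θ, 0 ≤ ρ θ) (hρ1 : ∑ θ, ρ θ = 1)
    (ρi : ∀ i, Θ i → ℝ)
    (hprod : ∀ θ, ρ θ = ∏ i, ρi i (θ i))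
    (f : Finset E → ℝ) (hf0 : ∀ X, 0 ≤ f X)
    (hmono : MonotoneFn f) (hsub : SubmodularFn f)
    -- valid utility game: utilities, total utility and marginal contribution conditions
    (v : Fin n → (Fin n → E) → ℝ)
    (htotal : ∀ a : Fin n → E, (∀ i, ∃ t, a i ∈ Act i t) →
      ∑ i, v i a ≤ f (Finset.univ.image a))
    (hmarg : ∀ a : Fin n → E, (∀ i, ∃ t, a i ∈ Act i t) → ∀ i,
      f (Finset.univ.image a) - f ((Finset.univ.image a).erase (a i)) ≤ v i a)
    -- π is a type-dependent distribution supported on A^θ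
    (π : (∀ i, Θ i) → (Fin n → E) → ℝ)
    (hπ0 : ∀ θ a, 0 ≤ π θ a) (hπ1 : ∀ θ, ∑ a, π θ a = 1)
    (hπsupp : ∀ θ a, π θ a ≠ 0 → ∀ i, a i ∈ Act i (θ i))
    -- π is a strategic-form coarse Bayesian solution
    (hSFCBS : ∀ i : Fin n, ∀ sᵢ : Θ i → E, (∀ t, sᵢ t ∈ Act i t) →
      ∑ θ, ρ θ * ∑ a, π θ a * v i (Function.update a i (sᵢ (θ i)))
        ≤ ∑ θ, ρ θ * ∑ a, π θ a * v i a) :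
    ((1 - (Real.exp 1)⁻¹) / 2) * gOPT Act hAne ρ f
      ≤ ∑ θ, ρ θ * ∑ a, π θ a * f (Finset.univ.image a) := by
  choose opt hopt_mem hopt using fun θ : ∀ i, Θ i => exists_mem_eq_sup'
    (Fintype.piFinset_nonempty.mpr fun i => hAne i (θ i)) fun a => f (univ.image a)
  have hOPT : gOPT Act hAne ρ f = ∑ θ, ρ θ * f (univ.image fun i => opt θ i) :=
    sum_congr rfl fun θ _ => by rw [hopt θ]
  have hsmooth := fun ω : Fin n → ∀ i, Θ i => welfare_le_two_mul_sfcbs_welfare Act ρ hρ0 hmono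
    hsub v htotal hmarg π hπ0 hπ1 hπsupp hSFCBS (fun i t => opt (Function.update (ω i) i t) i)
    fun i t => by simpa using Fintype.mem_piFinset.mp (hopt_mem (Function.update (ω i) i t)) i
  have hgap := correlation_gap (hf0 ∅) hmono hsub hρ0 hρ1 fun i θ => opt θ i
  obtain rfl : ρ = piWeight ρi := funext hprod
  rw [← piExpect_update_diag hρ1] at hgap
  have hle := piExpect_mono (fun _ => hρ0) hsmooth
  rw [piExpect_const fun _ => hρ1] at hle
  simp only [piExpect] at hgap hle
  rw [hOPT]
  linarith

/-- In any Bayesian valid utility game whose prior is independent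
(a product distribution), every strategic-form coarse Bayesian solution `π` satisfies
`E_{θ∼ρ}[E_{a∼π θ}[SW a]] ≥ ((1 − 1/e)/2) · OPT`:
the price of anarchy for SFCBSs is at least `(1 − 1/e)/2` in the independent case. -/
theorem sfcbs_poa_independent
    {n : ℕ} {Θ : Fin n → Type*} [∀ i, Fintype (Θ i)] [∀ i, DecidableEq (Θ i)]
    [∀ i, Nonempty (Θ i)]
    {E : Type*} [Fintype E] [DecidableEq E]
    (Act : ∀ i, Θ i → Finset E) (hAne : ∀ i t, (Act i t).Nonempty)
    (hdisj : ∀ p q : Σ i : Fin n, Θ i, p ≠ q → Disjoint (Act p.1 p.2) (Act q.1 q.2))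
    (ρ : (∀ i, Θ i) → ℝ) (hρ0 : ∀ θ, 0 ≤ ρ θ) (hρ1 : ∑ θ, ρ θ = 1)
    (ρi : ∀ i, Θ i → ℝ) (hρi0 : ∀ i t, 0 ≤ ρi i t) (hρi1 : ∀ i, ∑ t, ρi i t = 1)
    (hprod : ∀ θ, ρ θ = ∏ i, ρi i (θ i))
    (f : Finset E → ℝ) (hf0 : ∀ X, 0 ≤ f X)
    (hmono : MonotoneFn f) (hsub : SubmodularFn f)
    -- valid utility game: utilities, total utility and marginal contribution conditions
    (v : Fin n → (Fin n → E) → ℝ) (hv0 : ∀ i a, 0 ≤ v i a)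
    (htotal : ∀ a : Fin n → E, (∀ i, ∃ t, a i ∈ Act i t) →
      ∑ i, v i a ≤ f (Finset.univ.image a))
    (hmarg : ∀ a : Fin n → E, (∀ i, ∃ t, a i ∈ Act i t) → ∀ i,
      f (Finset.univ.image a) - f ((Finset.univ.image a).erase (a i)) ≤ v i a)
    -- π is a type-dependent distribution supported on A^θ
    (π : (∀ i, Θ i) → (Fin n → E) → ℝ)
    (hπ0 : ∀ θ a, 0 ≤ π θ a) (hπ1 : ∀ θ, ∑ a, π θ a = 1)
    (hπsupp : ∀ θ a, π θ a ≠ 0 → ∀ i, a i ∈ Act i (θ i))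
    -- π is a strategic-form coarse Bayesian solution
    (hSFCBS : ∀ i : Fin n, ∀ sᵢ : Θ i → E, (∀ t, sᵢ t ∈ Act i t) →
      ∑ θ, ρ θ * ∑ a, π θ a * v i (Function.update a i (sᵢ (θ i)))
        ≤ ∑ θ, ρ θ * ∑ a, π θ a * v i a) :
    ((1 - (Real.exp 1)⁻¹) / 2) * gOPT Act hAne ρ f
      ≤ ∑ θ, ρ θ * ∑ a, π θ a * f (Finset.univ.image a) :=
  sfcbs_poa_independent_general Act hAne ρ hρ0 hρ1 ρi hprod f hf0 hmono hsub v htotal hmarg π hπ0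
    hπ1 hπsupp hSFCBS
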